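/- arXiv:1407.0219 — 3 statements merged into one kernel-verified Lean document; each statement's English description precedes it below -/
import Mathlib

section
/- Let p > 1 and d(0) > 0, and define d(c) = d(0)(1-c²)^{(p+3)/(2(p-1))} for c² < 1. Then d''(c) = 4 d(0) (p+3)/(p-1)² · (1-c²)^{(7-3p)/(2(p-1))} · (c² - (p-1)/4). In particular, d is strictly convex on the set { c : (p-1)/4 < c² < 1 } when 1 < p < 5. -/
/-!
With `a = (p + 3) / (2 (p - 1))`, one has `d = d₀ (1 - c²)^a`, and differentiating twice gives
`((1 - c²)^a)'' = 2a (1 - c²)^(a - 2) ((2a - 1) c² - 1)`. Since `a - 2 = (7 - 3p) / (2 (p - 1))` and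
`2a - 1 = 4 / (p - 1)`, the only factor that can change sign is `c² - (p - 1) / 4`.
-/

open Set

namespace Real

theorem hasDerivAt_one_sub_sq_rpow (a : ℝ) {c : ℝ} (hc : c ^ 2 < 1) :
    HasDerivAt (fun x : ℝ => (1 - x ^ 2) ^ a) (-2 * a * c * (1 - c ^ 2) ^ (a - 1)) c := by
  have hbase : HasDerivAt (fun x : ℝ => 1 - x ^ 2) (-(2 * c)) c := by
    simpa using (hasDerivAt_pow 2 c).const_sub 1
  convert hbase.rpow_const (p := a) (Or.inl (by linarith)) using 1
  ring

theorem eqOn_deriv_one_sub_sq_rpow (a : ℝ) :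
    EqOn (deriv fun x : ℝ => (1 - x ^ 2) ^ a) (fun x => -2 * a * x * (1 - x ^ 2) ^ (a - 1))
      {x | x ^ 2 < 1} :=
  fun _ hx => (hasDerivAt_one_sub_sq_rpow a hx).deriv

theorem deriv_deriv_one_sub_sq_rpow (a : ℝ) {c : ℝ} (hc : c ^ 2 < 1) :
    deriv (deriv fun x : ℝ => (1 - x ^ 2) ^ a) c =
      2 * a * (1 - c ^ 2) ^ (a - 2) * ((2 * a - 1) * c ^ 2 - 1) := by
  have hopen : IsOpen {x : ℝ | x ^ 2 < 1} := isOpen_lt (by fun_prop) continuous_const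
  rw [((eqOn_deriv_one_sub_sq_rpow a).eventuallyEq_of_mem (hopen.mem_nhds hc)).deriv_eq,
    (((hasDerivAt_id' c).const_mul (-2 * a)).fun_mul
      (hasDerivAt_one_sub_sq_rpow (a - 1) hc)).deriv]
  have hsplit : (1 - c ^ 2) ^ (a - 1) = (1 - c ^ 2) ^ (a - 2) * (1 - c ^ 2) := by
    rw [← rpow_add_one (by linarith)]
    ring_nf
  rw [hsplit, show a - 1 - 1 = a - 2 by ring]
  ring

end Real

theorem boussinesq_d_second_derivative (p d0 : ℝ) (hp : 1 < p) (hd0 : 0 < d0)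
    (d : ℝ → ℝ)
    (hd : d = fun c : ℝ => d0 * (1 - c ^ 2) ^ ((p + 3) / (2 * (p - 1)))) :
    (∀ c : ℝ, c ^ 2 < 1 →
      deriv (deriv d) c =
        4 * d0 * ((p + 3) / (p - 1) ^ 2) * (1 - c ^ 2) ^ ((7 - 3 * p) / (2 * (p - 1))) *
          (c ^ 2 - (p - 1) / 4)) ∧
    (p < 5 → ∀ c : ℝ, (p - 1) / 4 < c ^ 2 → c ^ 2 < 1 → 0 < deriv (deriv d) c) := by
  have hp1 : p - 1 ≠ 0 := by linarith
  have formula : ∀ c : ℝ, c ^ 2 < 1 →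
      deriv (deriv d) c =
        4 * d0 * ((p + 3) / (p - 1) ^ 2) * (1 - c ^ 2) ^ ((7 - 3 * p) / (2 * (p - 1))) *
          (c ^ 2 - (p - 1) / 4) := by
    intro c hc
    have hexp : (p + 3) / (2 * (p - 1)) - 2 = (7 - 3 * p) / (2 * (p - 1)) := by
      field_simp; ring
    simp only [hd, deriv_const_mul_field', Real.deriv_deriv_one_sub_sq_rpow _ hc, hexp]
    field_simp
    ring
  refine ⟨formula, fun _ c hc₁ hc₂ => ?_⟩
  rw [formula c hc₂]
  have hbase : 0 < 1 - c ^ 2 := by linarith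
  have hfactor : 0 < c ^ 2 - (p - 1) / 4 := by linarith
  positivity
end

section
/- Let p > 1 and d(0) > 0, and define d(c) = d(0)(1-c²)^{(p+1)/(p-1)} for c² < 1. Then d''(c) = d(0) · 2(p+1)/(p-1)² · (1-c²)^{(3-p)/(p-1)} · ((p+3)c² - (p-1)). In particular, d''(c) > 0 whenever (p-1)/(p+3) < c² < 1, and d''(c) < 0 whenever c² < (p-1)/(p+3). -/
/-! With `α = (p + 1)/(p - 1)` one has `d = d(0)·(1 - c²)^α`, and differentiating twice gives
`((1 - c²)^α)'' = 2α (1 - c²)^(α - 2) ((2α - 1) c² - 1)`. Since `α - 2 = (3 - p)/(p - 1)` and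
`2α - 1 = (p + 3)/(p - 1)`, this is the stated formula, whose sign is that of `(p + 3) c² - (p - 1)`. -/

open Filter Topology

section OneSubSqRpow

variable (α : ℝ) {c : ℝ}

theorem hasDerivAt_one_sub_sq_rpow (hc : c ^ 2 < 1) :
    HasDerivAt (fun x : ℝ => (1 - x ^ 2) ^ α) (-2 * α * c * (1 - c ^ 2) ^ (α - 1)) c := by
  have hbase : HasDerivAt (fun x : ℝ => 1 - x ^ 2) (-(2 * c)) c := by
    simpa using (hasDerivAt_pow 2 c).const_sub 1
  convert hbase.rpow_const (p := α) (Or.inl (sub_pos.2 hc).ne') using 1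
  ring

theorem deriv_one_sub_sq_rpow_eventuallyEq (hc : c ^ 2 < 1) :
    deriv (fun x : ℝ => (1 - x ^ 2) ^ α) =ᶠ[𝓝 c]
      fun x => -2 * α * x * (1 - x ^ 2) ^ (α - 1) := by
  have hopen : IsOpen {x : ℝ | x ^ 2 < 1} := isOpen_lt (continuous_pow 2) continuous_const
  filter_upwards [hopen.mem_nhds hc] with x hx
  exact (hasDerivAt_one_sub_sq_rpow α hx).deriv

theorem deriv_deriv_one_sub_sq_rpow (hc : c ^ 2 < 1) :
    deriv (deriv fun x : ℝ => (1 - x ^ 2) ^ α) c =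
      2 * α * (1 - c ^ 2) ^ (α - 2) * ((2 * α - 1) * c ^ 2 - 1) := by
  have hpos : 0 < 1 - c ^ 2 := sub_pos.2 hc
  have hinner : HasDerivAt (fun x : ℝ => -2 * α * x) (-2 * α) c := by
    simpa using (hasDerivAt_id c).const_mul (-2 * α)
  have hprod := hinner.fun_mul (hasDerivAt_one_sub_sq_rpow (α - 1) hc)
  rw [(deriv_one_sub_sq_rpow_eventuallyEq α hc).deriv_eq, hprod.deriv]
  have hsplit : (1 - c ^ 2) ^ (α - 1) = (1 - c ^ 2) ^ (α - 2) * (1 - c ^ 2) := by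
    rw [← Real.rpow_add_one hpos.ne']
    ring_nf
  rw [hsplit, show α - 1 - 1 = α - 2 by ring]
  ring

end OneSubSqRpow

theorem klein_gordon_d_second_derivative (p d0 : ℝ) (hp : 1 < p) (hd0 : 0 < d0)
    (d : ℝ → ℝ)
    (hd : d = fun c : ℝ => d0 * (1 - c ^ 2) ^ ((p + 1) / (p - 1))) :
    (∀ c : ℝ, c ^ 2 < 1 →
      deriv (deriv d) c =
        d0 * (2 * (p + 1) / (p - 1) ^ 2) * (1 - c ^ 2) ^ ((3 - p) / (p - 1)) *
          ((p + 3) * c ^ 2 - (p - 1))) ∧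
    (∀ c : ℝ, (p - 1) / (p + 3) < c ^ 2 → c ^ 2 < 1 → 0 < deriv (deriv d) c) ∧
    (∀ c : ℝ, c ^ 2 < (p - 1) / (p + 3) → deriv (deriv d) c < 0) := by
  have hp1 : 0 < p - 1 := by linarith
  have hp3 : 0 < p + 3 := by linarith
  have hformula : ∀ c : ℝ, c ^ 2 < 1 →
      deriv (deriv d) c =
        d0 * (2 * (p + 1) / (p - 1) ^ 2) * (1 - c ^ 2) ^ ((3 - p) / (p - 1)) *
          ((p + 3) * c ^ 2 - (p - 1)) := by
    intro c hc
    have hexp : (p + 1) / (p - 1) - 2 = (3 - p) / (p - 1) := by field_simp; ring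
    simp only [hd, deriv_const_mul_field']
    rw [deriv_deriv_one_sub_sq_rpow _ hc, hexp]
    field_simp
    ring
  have hcoeff_pos : ∀ c : ℝ, c ^ 2 < 1 →
      0 < d0 * (2 * (p + 1) / (p - 1) ^ 2) * (1 - c ^ 2) ^ ((3 - p) / (p - 1)) := fun c hc => by
    have := Real.rpow_pos_of_pos (sub_pos.2 hc) ((3 - p) / (p - 1))
    positivity
  refine ⟨hformula, fun c hlow hc => ?_, fun c hhigh => ?_⟩
  · rw [hformula c hc]
    rw [div_lt_iff₀ hp3] at hlow
    exact mul_pos (hcoeff_pos c hc) (by nlinarith)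
  · have hc : c ^ 2 < 1 := hhigh.trans ((div_lt_one hp3).mpr (by linarith))
    rw [hformula c hc]
    rw [lt_div_iff₀ hp3] at hhigh
    exact mul_neg_of_pos_of_neg (hcoeff_pos c hc) (by nlinarith)
end

section
/- Let p > 1 and m > 0. Suppose u satisfies m^{(p+1)/2} ≤ I^{(p+1)/2}/Q where I = I_c(u) > 0 and Q = Q(u) > 0, and suppose 2I - Q < 0. Then, with d = 2^{2/(p-1)} (p-1)/(p+1) · m^{(p+1)/(p-1)}, one has (p+1)/(p-1) · d < I. -/
theorem lemma53_estimate (p m I Q : ℝ) (hp : 1 < p) (hm : 0 < m)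
    (hI : 0 < I) (hQ : 0 < Q)
    (hmin : m ^ ((p + 1) / 2) ≤ I ^ ((p + 1) / 2) / Q)
    (hneg : 2 * I - Q < 0) :
    (p + 1) / (p - 1) * (2 ^ (2 / (p - 1)) * ((p - 1) / (p + 1)) * m ^ ((p + 1) / (p - 1)))
      < I := by
  have hp1 : (0:ℝ) < p - 1 := by linarith
  have hp2 : (0:ℝ) < p + 1 := by linarith
  have hm1 : (0:ℝ) < m ^ ((p + 1) / 2) := Real.rpow_pos_of_pos hm _
  have h1 : m ^ ((p + 1) / 2) * Q ≤ I ^ ((p + 1) / 2) :=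
    (le_div_iff₀ hQ).mp hmin
  have h3 : m ^ ((p + 1) / 2) * (2 * I) < I ^ ((p + 1) / 2) :=
    lt_of_lt_of_le (by nlinarith) h1
  have hsplit : I ^ ((p + 1) / 2) = I * I ^ ((p - 1) / 2) := by
    rw [← Real.rpow_one_add' (le_of_lt hI) (by positivity)]
    ring_nf
  have h4 : 2 * m ^ ((p + 1) / 2) < I ^ ((p - 1) / 2) := by
    rw [hsplit] at h3
    nlinarith [Real.rpow_pos_of_pos hI ((p - 1) / 2)]
  have h5 : (2 * m ^ ((p + 1) / 2)) ^ (2 / (p - 1)) < (I ^ ((p - 1) / 2)) ^ (2 / (p - 1)) :=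
    Real.rpow_lt_rpow (by positivity) h4 (by positivity)
  have hL : (2 * m ^ ((p + 1) / 2)) ^ (2 / (p - 1))
      = 2 ^ (2 / (p - 1)) * m ^ ((p + 1) / (p - 1)) := by
    rw [Real.mul_rpow (by norm_num) (le_of_lt hm1), ← Real.rpow_mul (le_of_lt hm),
      show (p + 1) / 2 * (2 / (p - 1)) = (p + 1) / (p - 1) by field_simp]
  have hR : (I ^ ((p - 1) / 2)) ^ (2 / (p - 1)) = I := by
    rw [← Real.rpow_mul (le_of_lt hI)]
    rw [show (p - 1) / 2 * (2 / (p - 1)) = 1 by field_simp, Real.rpow_one]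
  rw [hL, hR] at h5
  calc (p + 1) / (p - 1) * (2 ^ (2 / (p - 1)) * ((p - 1) / (p + 1)) * m ^ ((p + 1) / (p - 1)))
      = 2 ^ (2 / (p - 1)) * m ^ ((p + 1) / (p - 1)) := by field_simp
    _ < I := h5
end
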